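/- Minimality of the side length: let a, b, c, d be integers with d ≥ 1, gcd(a,b,c) = 1 and a² + b² + c² = 3d². If O = (0,0,0), A, B are three points of ℤ³ forming an equilateral triangle and lying in the plane ax + by + cz = 0, then the squared side length of the triangle is at least 2d². -/

import Mathlib

/-- Dot product of integer vectors in `ℤ³`. -/
def dot3 (u v : Fin 3 → ℤ) : ℤ := ∑ i, u i * v i

/-- Squared Euclidean distance between two points of `ℤ³`. -/
def distSq (u v : Fin 3 → ℤ) : ℤ := dot3 (u - v) (u - v)

/-!
Put `v = (a, b, c)`, `n = |A|² = |B|² = |A - B|²` and `m = A ⬝ B`, so that `n = 2m`.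
Since `A, B ⊥ v` and `v` is primitive, `A × B = k v` with `k ∈ ℤ`; comparing
`|A × B|² = 3m²` with `3k²d²` gives `kd ∣ m`, and then `k (v × A) = (A × B) × A = m (2B - A)`
shows `v × A ≡ 0 mod d`. For `u` with `u ⬝ v = 1` this forces `A = t v + d W`, and expanding
`A ⬝ A` with `A ⬝ v = 0` gives `d² ∣ n`. Finally `d` is odd, otherwise `a, b, c` would all be
even, so `2d² ∣ n`.
-/

open Matrix

theorem distSq_eq_dotProduct (u v : Fin 3 → ℤ) : distSq u v = (u - v) ⬝ᵥ (u - v) := rfl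

theorem distSq_zero_left (u : Fin 3 → ℤ) : distSq 0 u = u ⬝ᵥ u := by
  rw [distSq_eq_dotProduct, zero_sub, neg_dotProduct, dotProduct_neg, neg_neg]

theorem distSq_eq (u v : Fin 3 → ℤ) : distSq u v = u ⬝ᵥ u + v ⬝ᵥ v - 2 * (u ⬝ᵥ v) := by
  rw [distSq_eq_dotProduct, sub_dotProduct, dotProduct_sub, dotProduct_sub, dotProduct_comm v u]
  ring

section CommRing

variable {R : Type*} [CommRing R] {u v : Fin 3 → R}

theorem eq_smul_sub_cross_cross (hu : u ⬝ᵥ v = 1) (w : Fin 3 → R) :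
    w = (u ⬝ᵥ w) • v - u ⨯₃ (v ⨯₃ w) := by
  rw [cross_cross_eq_smul_sub_smul', dotProduct_comm v u, hu, one_smul, sub_sub_cancel]

theorem eq_smul_of_cross_eq_zero (hu : u ⬝ᵥ v = 1) {w : Fin 3 → R} (hw : v ⨯₃ w = 0) :
    w = (u ⬝ᵥ w) • v := by
  simpa [hw] using eq_smul_sub_cross_cross hu w

theorem sq_dvd_dotProduct_self_of_cross_eq_smul (hu : u ⬝ᵥ v = 1) {d : R} {w W : Fin 3 → R}
    (hv : d ^ 2 ∣ v ⬝ᵥ v) (hw : w ⬝ᵥ v = 0) (hW : v ⨯₃ w = d • W) : d ^ 2 ∣ w ⬝ᵥ w := by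
  set t := u ⬝ᵥ w
  set W' := u ⨯₃ W
  have hdec : w = t • v - d • W' := by
    rw [eq_smul_sub_cross_cross hu w, hW, map_smul]
  obtain ⟨s, hs⟩ := hv
  rw [hdec] at hw ⊢
  simp only [sub_dotProduct, dotProduct_sub, smul_dotProduct, dotProduct_smul, smul_eq_mul,
    dotProduct_comm W' v] at hw ⊢
  exact ⟨W' ⬝ᵥ W' - t ^ 2 * s, by linear_combination 2 * t * hw - t ^ 2 * hs⟩

end CommRing

theorem exists_cross_eq_smul_of_equilateral {u v A B : Fin 3 → ℤ} {d : ℤ}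
    (hu : u ⬝ᵥ v = 1) (hv : v ⬝ᵥ v = 3 * d ^ 2) (hA : A ⬝ᵥ v = 0) (hB : B ⬝ᵥ v = 0)
    (hAA : A ⬝ᵥ A = 2 * (A ⬝ᵥ B)) (hBB : B ⬝ᵥ B = 2 * (A ⬝ᵥ B)) (hA₀ : A ≠ 0) :
    ∃ W, v ⨯₃ A = d • W := by
  obtain ⟨k, hAB⟩ : ∃ k, A ⨯₃ B = k • v := by
    refine ⟨_, eq_smul_of_cross_eq_zero hu ?_⟩
    rw [← cross_anticomm, cross_cross_eq_smul_sub_smul, hA, hB]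
    simp
  have hsq : (A ⬝ᵥ B) ^ 2 = (k * d) ^ 2 := by
    have h := cross_dot_cross A B A B
    rw [hAB, smul_dotProduct, dotProduct_smul, hv, hAA, hBB, dotProduct_comm B A] at h
    simp only [smul_eq_mul] at h
    exact mul_left_cancel₀ three_ne_zero (by linear_combination -h)
  obtain ⟨e, he⟩ := (Int.pow_dvd_pow_iff two_ne_zero).mp (dvd_of_eq hsq.symm)
  have hk : k ≠ 0 := by
    rintro rfl
    rw [he, zero_mul, zero_mul, mul_zero, dotProduct_self_eq_zero] at hAA
    exact hA₀ hAA
  have hcross : k • (v ⨯₃ A) = k • (d • (e • (2 • B - A))) := by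
    have h := cross_cross_eq_smul_sub_smul A B A
    rw [hAB, map_smul, LinearMap.smul_apply, hAA, dotProduct_comm B A, he] at h
    rw [h]
    module
  exact ⟨_, smul_right_injective _ hk hcross⟩

theorem exists_dotProduct_eq_one_of_gcd_eq_one {a b c : ℤ} (h : Int.gcd (Int.gcd a b) c = 1) :
    ∃ u : Fin 3 → ℤ, u ⬝ᵥ ![a, b, c] = 1 := by
  have hab := Int.gcd_eq_gcd_ab a b
  have habc := Int.gcd_eq_gcd_ab (Int.gcd a b) c
  rw [h, Nat.cast_one] at habc
  refine ⟨![a.gcdA b * (a.gcd b : ℤ).gcdA c, a.gcdB b * (a.gcd b : ℤ).gcdA c,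
    (a.gcd b : ℤ).gcdB c], ?_⟩
  simp only [vec3_dotProduct, cons_val]
  linear_combination -habc - (a.gcd b : ℤ).gcdA c * hab

theorem two_dvd_of_four_dvd_sq_add_sq_add_sq {a b c : ℤ} (h : 4 ∣ a ^ 2 + b ^ 2 + c ^ 2) :
    2 ∣ a ∧ 2 ∣ b ∧ 2 ∣ c := by
  have hmod4 : ∀ x y z : ZMod 4, x ^ 2 + y ^ 2 + z ^ 2 = 0 → 2 * x = 0 ∧ 2 * y = 0 ∧ 2 * z = 0 := by
    decide
  have two_dvd : ∀ x : ℤ, 2 * (x : ZMod 4) = 0 → 2 ∣ x := fun x hx => by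
    have := (ZMod.intCast_zmod_eq_zero_iff_dvd (2 * x) 4).mp (by push_cast; exact hx)
    omega
  have h4 := (ZMod.intCast_zmod_eq_zero_iff_dvd _ 4).mpr h
  push_cast at h4
  obtain ⟨ha, hb, hc⟩ := hmod4 _ _ _ h4
  exact ⟨two_dvd a ha, two_dvd b hb, two_dvd c hc⟩

theorem odd_of_sq_add_sq_add_sq_eq_three_mul_sq {a b c d : ℤ} (hgcd : Int.gcd (Int.gcd a b) c = 1)
    (habc : a ^ 2 + b ^ 2 + c ^ 2 = 3 * d ^ 2) : Odd d := by
  rw [← Int.not_even_iff_odd, even_iff_two_dvd]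
  rintro ⟨e, rfl⟩
  obtain ⟨ha, hb, hc⟩ := two_dvd_of_four_dvd_sq_add_sq_add_sq ⟨3 * e ^ 2, by rw [habc]; ring⟩
  have h2 := Int.dvd_coe_gcd (Int.dvd_coe_gcd ha hb) hc
  rw [hgcd] at h2
  norm_num at h2

theorem equilateralTriangle_sideSq_ge_general (a b c d : ℤ)
    (hgcd : Int.gcd (Int.gcd a b) c = 1) (habc : a ^ 2 + b ^ 2 + c ^ 2 = 3 * d ^ 2)
    (A B : Fin 3 → ℤ) (hOA : A ≠ 0)
    (h₁ : distSq 0 A = distSq A B) (h₂ : distSq 0 B = distSq A B)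
    (hplaneA : a * A 0 + b * A 1 + c * A 2 = 0)
    (hplaneB : a * B 0 + b * B 1 + c * B 2 = 0) :
    2 * d ^ 2 ≤ distSq A B := by
  set v := ![a, b, c]
  obtain ⟨u, hu⟩ := exists_dotProduct_eq_one_of_gcd_eq_one hgcd
  have hv : v ⬝ᵥ v = 3 * d ^ 2 := by
    simp only [v, vec3_dotProduct, cons_val]; linear_combination habc
  have hA : A ⬝ᵥ v = 0 := by
    simp only [v, vec3_dotProduct, cons_val]; linear_combination hplaneA
  have hB : B ⬝ᵥ v = 0 := by
    simp only [v, vec3_dotProduct, cons_val]; linear_combination hplaneB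
  rw [distSq_zero_left] at h₁ h₂
  have hn : distSq A B = 2 * (A ⬝ᵥ B) := by linarith [distSq_eq A B]
  obtain ⟨W, hW⟩ := exists_cross_eq_smul_of_equilateral hu hv hA hB (h₁.trans hn) (h₂.trans hn) hOA
  have hd2 : d ^ 2 ∣ distSq A B :=
    h₁ ▸ sq_dvd_dotProduct_self_of_cross_eq_smul hu ⟨3, by rw [hv, mul_comm]⟩ hA hW
  have hcop : IsCoprime 2 (d ^ 2) :=
    Int.isCoprime_two_left.mpr (odd_of_sq_add_sq_add_sq_eq_three_mul_sq hgcd habc).pow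
  have hpos : 0 < distSq A B := by
    simpa [← h₁] using dotProduct_self_star_pos_iff.mpr hOA
  exact Int.le_of_dvd hpos (hcop.mul_dvd ⟨_, hn⟩ hd2)

/-- Minimality of the side length: an equilateral triangle `O = (0,0,0), A, B` in `ℤ³`
lying in the plane `ax + by + cz = 0`, where `a² + b² + c² = 3d²`, `gcd(a,b,c) = 1` and
`d ≥ 1`, has squared side length at least `2d²`. -/
theorem equilateralTriangle_sideSq_ge (a b c d : ℤ) (hd : 1 ≤ d)
    (hgcd : Int.gcd (Int.gcd a b) c = 1) (habc : a ^ 2 + b ^ 2 + c ^ 2 = 3 * d ^ 2)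
    (A B : Fin 3 → ℤ) (hOA : A ≠ 0) (hOB : B ≠ 0) (hAB : A ≠ B)
    (h₁ : distSq 0 A = distSq A B) (h₂ : distSq 0 B = distSq A B)
    (hplaneA : a * A 0 + b * A 1 + c * A 2 = 0)
    (hplaneB : a * B 0 + b * B 1 + c * B 2 = 0) :
    2 * d ^ 2 ≤ distSq A B :=
  equilateralTriangle_sideSq_ge_general a b c d hgcd habc A B hOA h₁ h₂ hplaneA hplaneB
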